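/- arXiv:math/0501180 — 3 statements merged into one kernel-verified Lean document; each statement's English description precedes it below -/
import Mathlib

section
/- If a pure difference binomial h is reduced by one step modulo a set of pure difference binomials (i.e., a term t of h divisible by the leading monomial of some binomial q in the set is replaced via h - q·(t/lm(q))), the result is again a pure difference binomial, a difference of a monomial with itself (hence zero after cancellation), or zero. -/
open MvPolynomial

theorem monomial_tsub_mul_monomial_sub_monomial {σ R : Type*} [CommRing R]
    {a c : σ →₀ ℕ} (d : σ →₀ ℕ) (hca : c ≤ a) (s : R) :
    monomial (a - c) s * (monomial c 1 - monomial d 1) =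
      monomial a s - monomial (a - c + d) s := by
  rw [mul_sub, monomial_mul, monomial_mul, tsub_add_cancel_of_le hca, mul_one]

theorem binomial_reduction_step_general
    {K : Type*} [Field K] {n : ℕ} (a b c d : Fin n →₀ ℕ)
    (r : MvPolynomial (Fin n) K)
    (hr : (c ≤ a ∧ r = (monomial a (1 : K) - monomial b 1)
              - monomial (a - c) (1 : K) * (monomial c 1 - monomial d 1)) ∨
          (c ≤ b ∧ r = (monomial a (1 : K) - monomial b 1)
              + monomial (b - c) (1 : K) * (monomial c 1 - monomial d 1))) :
    (∃ e f : Fin n →₀ ℕ, e ≠ f ∧ r = monomial e (1 : K) - monomial f 1) ∨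
      (∃ e : Fin n →₀ ℕ, r = monomial e (1 : K) - monomial e 1) ∨ r = 0 := by
  obtain ⟨e, f, rfl⟩ : ∃ e f : Fin n →₀ ℕ, r = monomial e (1 : K) - monomial f 1 := by
    rcases hr with ⟨hca, rfl⟩ | ⟨hcb, rfl⟩
    · exact ⟨a - c + d, b, by rw [monomial_tsub_mul_monomial_sub_monomial d hca]; ring⟩
    · exact ⟨a, b - c + d, by rw [monomial_tsub_mul_monomial_sub_monomial d hcb]; ring⟩
  by_cases hef : e = f
  · exact Or.inr (Or.inl ⟨e, by rw [hef]⟩)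
  · exact Or.inl ⟨e, f, hef, rfl⟩

/-- One reduction step of a pure difference binomial `h = x^a - x^b` by a pure
difference binomial `q = x^c - x^d` with leading monomial `x^c` (subtracting
`(t / lm q) · q` where `t` is a term of `h` divisible by `x^c`) yields again a
pure difference binomial, a difference of a monomial with itself, or zero. -/
theorem binomial_reduction_step
    {K : Type*} [Field K] {n : ℕ} (a b c d : Fin n →₀ ℕ)
    (hab : a ≠ b) (hcd : c ≠ d)
    (r : MvPolynomial (Fin n) K)
    (hr : (c ≤ a ∧ r = (monomial a (1 : K) - monomial b 1)
              - monomial (a - c) (1 : K) * (monomial c 1 - monomial d 1)) ∨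
          (c ≤ b ∧ r = (monomial a (1 : K) - monomial b 1)
              + monomial (b - c) (1 : K) * (monomial c 1 - monomial d 1))) :
    (∃ e f : Fin n →₀ ℕ, e ≠ f ∧ r = monomial e (1 : K) - monomial f 1) ∨
      (∃ e : Fin n →₀ ℕ, r = monomial e (1 : K) - monomial e 1) ∨ r = 0 :=
  binomial_reduction_step_general a b c d r hr
end

section
/- In a finite set U of pairwise distinct monomials, every monomial w has at most one Janet divisor in U. That is, if u, v ∈ U, u |_J w and v |_J w (Janet division with respect to U), then u = v. -/
/-! Comparing two Janet divisors `u`, `v` of `w` coordinate by coordinate: once they agree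
before `x_i`, whichever has the smaller `deg_i` lies strictly below `w` there, so `x_i` is
multiplicative for it and its `deg_i` is the maximum over a class containing the other one.
Hence `deg_i u = deg_i v`, and induction along the variable order gives `u = v`. -/

/-- `x_i` is Janet multiplicative for `u` with respect to the finite monomial set `U`
(monomials are identified with their exponent vectors, `x_1 ≻ x_2 ≻ … ≻ x_n`):
`deg_i u` equals the maximum of `deg_i v` over all `v ∈ U` agreeing with `u`
in all degrees `deg_j` for `j < i`. -/
def JanetMult {n : ℕ} (U : Finset (Fin n → ℕ)) (u : Fin n → ℕ) (i : Fin n) : Prop :=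
  u i = (U.filter (fun v => ∀ j, j < i → v j = u j)).sup (fun v => v i)

/-- `u` is a Janet divisor of `w` with respect to `U`: `u ∣ w` and every variable
occurring in `w/u` is Janet multiplicative for `u`. -/
def JanetDiv {n : ℕ} (U : Finset (Fin n → ℕ)) (u w : Fin n → ℕ) : Prop :=
  (∀ i, u i ≤ w i) ∧ ∀ i, u i < w i → JanetMult U u i

namespace JanetMult

variable {n : ℕ} {U : Finset (Fin n → ℕ)} {u v : Fin n → ℕ} {i : Fin n}

theorem le_of_mem_of_eq_of_lt (h : JanetMult U u i) (hv : v ∈ U)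
    (hvu : ∀ j, j < i → v j = u j) : v i ≤ u i := by
  have hv_mem : v ∈ U.filter (fun x => ∀ j, j < i → x j = u j) :=
    Finset.mem_filter.2 ⟨hv, hvu⟩
  exact h ▸ Finset.le_sup (f := fun x => x i) hv_mem

end JanetMult

namespace JanetDiv

variable {n : ℕ} {U : Finset (Fin n → ℕ)} {u v w : Fin n → ℕ} {i : Fin n}

theorem le_of_mem_of_eq_of_lt (h : JanetDiv U u w) (hv : v ∈ U) (hvw : v i ≤ w i)
    (hvu : ∀ j, j < i → v j = u j) : v i ≤ u i := by
  by_contra! huv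
  exact huv.not_ge ((h.2 i (huv.trans_le hvw)).le_of_mem_of_eq_of_lt hv hvu)

end JanetDiv

/-- Uniqueness of Janet divisors: a monomial `w` has at most one Janet divisor
in a finite set `U` of pairwise distinct monomials. -/
theorem janetDiv_unique {n : ℕ} (U : Finset (Fin n → ℕ)) (u v w : Fin n → ℕ)
    (hu : u ∈ U) (hv : v ∈ U) (hu_div : JanetDiv U u w) (hv_div : JanetDiv U v w) :
    u = v := by
  funext i
  induction i using WellFoundedLT.induction with
  | _ i ih =>
    exact le_antisymm
      (hv_div.le_of_mem_of_eq_of_lt hu (hu_div.1 i) ih)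
      (hu_div.le_of_mem_of_eq_of_lt hv (hv_div.1 i) fun j hj => (ih j hj).symm)
end

section
/- Let c ∈ N^n and let ≻_c be an admissible monomial ordering compatible with c (i.e., x^a ≻_c x^b whenever c·a > c·b, ties broken by a fixed admissible order). Let G be a Gröbner basis of the toric ideal I_A with respect to ≻_c, and let x₀ ∈ N^n with A·x₀ = b. If x^{x*} is the normal form of x^{x₀} modulo G, then A·x* = b and c·x* ≤ c·x₀. -/
open MvPolynomial
open scoped MonomialOrder

/-- The positive part `u⁺ ∈ ℕ^n` of `u ∈ ℤ^n`. -/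
noncomputable def posPart {n : ℕ} (u : Fin n → ℤ) : Fin n →₀ ℕ :=
  Finsupp.equivFunOnFinite.symm (fun i => (u i).toNat)

/-- The negative part `u⁻ ∈ ℕ^n` of `u ∈ ℤ^n`. -/
noncomputable def negPart {n : ℕ} (u : Fin n → ℤ) : Fin n →₀ ℕ :=
  posPart (-u)

/-- The leading exponent of a polynomial with respect to a monomial order. -/
noncomputable def lmExp {K : Type*} [Field K] {n : ℕ} (M : MonomialOrder (Fin n))
    (p : MvPolynomial (Fin n) K) : Fin n →₀ ℕ :=
  M.toSyn.symm (p.support.sup M.toSyn)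

/-- One reduction step of a monomial modulo a set `G` of binomials
`x^{p.1} - x^{p.2}` (leading exponent `p.1`): divide out `x^{p.1}` and
multiply by `x^{p.2}`. -/
def RedStep {n : ℕ} (G : Set ((Fin n →₀ ℕ) × (Fin n →₀ ℕ))) (a a' : Fin n →₀ ℕ) : Prop :=
  ∃ p ∈ G, p.1 ≤ a ∧ a' = a - p.1 + p.2

/-! Each reduction step `a ↦ a - p.1 + p.2` satisfies `(a - p.1 + p.2) + p.1 = a + p.2`, so any
additive invariant `φ` changes by `φ p.2 - φ p.1`. For the `A`-degree this is zero because
`x^{p.1} - x^{p.2}` lies in the toric ideal, and for the cost it is nonpositive because the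
leading exponent `p.1` cannot have smaller cost than `p.2` under a `c`-compatible order. -/

section RedStep

variable {n : ℕ} {G : Set ((Fin n →₀ ℕ) × (Fin n →₀ ℕ))} {a a' : Fin n →₀ ℕ}

theorem RedStep.exists_add_eq (h : RedStep G a a') : ∃ p ∈ G, a' + p.1 = a + p.2 := by
  obtain ⟨p, hp, hle, rfl⟩ := h
  exact ⟨p, hp, by rw [add_right_comm, tsub_add_cancel_of_le hle]⟩

theorem RedStep.map_eq {M : Type*} [AddCancelMonoid M] {φ : (Fin n →₀ ℕ) →+ M}
    (hG : ∀ p ∈ G, φ p.2 = φ p.1) (h : RedStep G a a') : φ a' = φ a := by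
  obtain ⟨p, hp, hsum⟩ := h.exists_add_eq
  apply add_right_cancel (b := φ p.1)
  rw [← map_add, hsum, map_add, hG p hp]

theorem RedStep.map_le {M : Type*} [AddCommMonoid M] [PartialOrder M]
    [IsOrderedCancelAddMonoid M] {φ : (Fin n →₀ ℕ) →+ M}
    (hG : ∀ p ∈ G, φ p.2 ≤ φ p.1) (h : RedStep G a a') : φ a' ≤ φ a := by
  obtain ⟨p, hp, hsum⟩ := h.exists_add_eq
  apply le_of_add_le_add_right (a := φ p.1)
  rw [← map_add, hsum, map_add]
  exact add_le_add_right (hG p hp) _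

theorem RedStep.reflTransGen_map_eq {M : Type*} [AddCancelMonoid M] {φ : (Fin n →₀ ℕ) →+ M}
    (hG : ∀ p ∈ G, φ p.2 = φ p.1) (h : Relation.ReflTransGen (RedStep G) a a') :
    φ a' = φ a := by
  induction h with
  | refl => rfl
  | tail _ hstep ih => exact (hstep.map_eq hG).trans ih

theorem RedStep.reflTransGen_map_le {M : Type*} [AddCommMonoid M] [PartialOrder M]
    [IsOrderedCancelAddMonoid M] {φ : (Fin n →₀ ℕ) →+ M}
    (hG : ∀ p ∈ G, φ p.2 ≤ φ p.1) (h : Relation.ReflTransGen (RedStep G) a a') :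
    φ a' ≤ φ a := by
  induction h with
  | refl => exact le_rfl
  | tail _ hstep ih => exact (hstep.map_le hG).trans ih

end RedStep

def toricDegree {m n : ℕ} (A : Matrix (Fin m) (Fin n) ℤ) : (Fin n →₀ ℕ) →+ (Fin m → ℤ) where
  toFun a := A.mulVec fun i => (a i : ℤ)
  map_zero' := by simp only [Finsupp.coe_zero, Pi.zero_apply, Nat.cast_zero]; exact A.mulVec_zero
  map_add' a b := by
    rw [← Matrix.mulVec_add]
    congr 1

def linearCost {n : ℕ} (c : Fin n → ℕ) : (Fin n →₀ ℕ) →+ ℕ where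
  toFun a := ∑ i, c i * a i
  map_zero' := by simp
  map_add' a b := by simp [mul_add, Finset.sum_add_distrib]

theorem linearCost_le_of_lt {n : ℕ} {c : Fin n → ℕ} {M : MonomialOrder (Fin n)}
    (hcompat : ∀ a a' : Fin n →₀ ℕ, (∑ i, c i * a' i) < (∑ i, c i * a i) → a' ≺[M] a)
    {a a' : Fin n →₀ ℕ} (h : a' ≺[M] a) : linearCost c a' ≤ linearCost c a :=
  not_lt.mp fun hlt => lt_asymm h (hcompat a' a hlt)

theorem toric_groebner_normal_form_solves_ip_general
    {K : Type*} [Field K] {m n : ℕ} (A : Matrix (Fin m) (Fin n) ℤ) (b : Fin m → ℤ)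
    (c : Fin n → ℕ) (M : MonomialOrder (Fin n))
    (hcompat : ∀ a a' : Fin n →₀ ℕ, (∑ i, c i * a' i) < (∑ i, c i * a i) → a' ≺[M] a)
    (IA : Ideal (MvPolynomial (Fin n) K))
    (hmemIff : ∀ a a' : Fin n →₀ ℕ,
      ((monomial a (1 : K) - monomial a' 1) ∈ IA ↔
        A.mulVec (fun i => (a i : ℤ)) = A.mulVec (fun i => (a' i : ℤ))))
    (G : Set ((Fin n →₀ ℕ) × (Fin n →₀ ℕ)))
    (hGI : ∀ p ∈ G, (monomial p.1 (1 : K) - monomial p.2 1) ∈ IA)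
    (hGlead : ∀ p ∈ G, p.2 ≺[M] p.1)
    (x0 xs : Fin n →₀ ℕ)
    (hx0 : A.mulVec (fun i => (x0 i : ℤ)) = b)
    (hred : Relation.ReflTransGen (RedStep G) x0 xs) :
    A.mulVec (fun i => (xs i : ℤ)) = b ∧ (∑ i, c i * xs i) ≤ ∑ i, c i * x0 i := by
  have hGdegree : ∀ p ∈ G, toricDegree A p.2 = toricDegree A p.1 :=
    fun p hp => ((hmemIff p.1 p.2).mp (hGI p hp)).symm
  have hGcost : ∀ p ∈ G, linearCost c p.2 ≤ linearCost c p.1 :=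
    fun p hp => linearCost_le_of_lt hcompat (hGlead p hp)
  exact ⟨(RedStep.reflTransGen_map_eq hGdegree hred).trans hx0,
    RedStep.reflTransGen_map_le hGcost hred⟩

/-- Integer programming via Gröbner bases of toric ideals: if `G` is a Gröbner
basis of the toric ideal `I_A` with respect to an order compatible with the cost
vector `c`, and `x^{x*}` is the normal form of `x^{x₀}` modulo `G` where
`A·x₀ = b`, then `A·x* = b` and `c·x* ≤ c·x₀`. -/
theorem toric_groebner_normal_form_solves_ip
    {K : Type*} [Field K] {m n : ℕ} (A : Matrix (Fin m) (Fin n) ℤ) (b : Fin m → ℤ)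
    (c : Fin n → ℕ) (M : MonomialOrder (Fin n))
    (hcompat : ∀ a a' : Fin n →₀ ℕ, (∑ i, c i * a' i) < (∑ i, c i * a i) → a' ≺[M] a)
    (IA : Ideal (MvPolynomial (Fin n) K))
    (hIA : IA = Ideal.span {p : MvPolynomial (Fin n) K |
      ∃ u : Fin n → ℤ, A.mulVec u = 0 ∧
        p = monomial (posPart u) (1 : K) - monomial (negPart u) 1})
    (hmemIff : ∀ a a' : Fin n →₀ ℕ,
      ((monomial a (1 : K) - monomial a' 1) ∈ IA ↔
        A.mulVec (fun i => (a i : ℤ)) = A.mulVec (fun i => (a' i : ℤ))))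
    (G : Set ((Fin n →₀ ℕ) × (Fin n →₀ ℕ)))
    (hGI : ∀ p ∈ G, (monomial p.1 (1 : K) - monomial p.2 1) ∈ IA)
    (hGlead : ∀ p ∈ G, p.2 ≺[M] p.1)
    (hGspan : Ideal.span {q : MvPolynomial (Fin n) K |
        ∃ p ∈ G, q = monomial p.1 (1 : K) - monomial p.2 1} = IA)
    (hGroebner : ∀ f ∈ IA, f ≠ 0 → ∃ p ∈ G, p.1 ≤ lmExp M f)
    (x0 xs : Fin n →₀ ℕ)
    (hx0 : A.mulVec (fun i => (x0 i : ℤ)) = b)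
    (hred : Relation.ReflTransGen (RedStep G) x0 xs)
    (hirr : ∀ a', ¬ RedStep G xs a') :
    A.mulVec (fun i => (xs i : ℤ)) = b ∧ (∑ i, c i * xs i) ≤ ∑ i, c i * x0 i :=
  toric_groebner_normal_form_solves_ip_general A b c M hcompat IA hmemIff G hGI hGlead x0 xs hx0
    hred
end
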